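/- arXiv:1902.02404 — 2 statements merged into one kernel-verified Lean document; each statement's English description precedes it below -/
import Mathlib

section
/- In flow-firing with distinguished face σ, starting from the configuration K with K σ = k and K τ = 0 for τ ≠ σ (k ≥ 0), every reachable configuration K* satisfies K* τ ≤ max(0, k − dist(σ,τ) + 1) for all faces τ ≠ σ. -/
def Nb (a b : ℤ × ℤ) : Prop := |a.1 - b.1| + |a.2 - b.2| = 1

def FinSupp (F : ℤ × ℤ → ℤ) : Prop := {τ | F τ ≠ 0}.Finite

/-- A firing step: neighbors `a`, `b` with `F a ≥ F b + 2`; `F a` decreases by 1 and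
`F b` increases by 1. -/
def Step (F F' : ℤ × ℤ → ℤ) : Prop :=
  ∃ a b : ℤ × ℤ, Nb a b ∧ F b + 2 ≤ F a ∧
    F' = Function.update (Function.update F a (F a - 1)) b (F b + 1)

/-- Manhattan distance between faces. -/
def mdist (a b : ℤ × ℤ) : ℤ := |a.1 - b.1| + |a.2 - b.2|

/-- Firing step for the process with distinguished face `σ`. -/
def StepD (σ : ℤ × ℤ) (F F' : ℤ × ℤ → ℤ) : Prop :=
  (∃ a b : ℤ × ℤ, a ≠ σ ∧ b ≠ σ ∧ Nb a b ∧ F b + 2 ≤ F a ∧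
      F' = Function.update (Function.update F a (F a - 1)) b (F b + 1)) ∨
  (∃ a : ℤ × ℤ, Nb a σ ∧ F a < F σ ∧ F' = Function.update F a (F a + 1)) ∨
  (∃ a : ℤ × ℤ, Nb a σ ∧ F σ < F a ∧ F' = Function.update F a (F a - 1))

/-- Initial configuration: `k` at `σ`, zero elsewhere. -/
def Kinit (σ : ℤ × ℤ) (k : ℤ) : ℤ × ℤ → ℤ := fun τ => if τ = σ then k else 0

lemma mdist_tri (x y z : ℤ × ℤ) : mdist x z ≤ mdist x y + mdist y z := by
  simp only [mdist]
  have h1 := abs_sub_le x.1 y.1 z.1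
  have h2 := abs_sub_le x.2 y.2 z.2
  linarith

lemma mdist_of_nb {a b : ℤ × ℤ} (h : Nb a b) : mdist a b = 1 := h

lemma mdist_comm (a b : ℤ × ℤ) : mdist a b = mdist b a := by
  simp only [mdist, abs_sub_comm]

lemma nb_ne {a b : ℤ × ℤ} (h : Nb a b) : a ≠ b := by
  rintro rfl
  simp [Nb] at h

/-- Reachable configurations obey the distance bound. -/
theorem stmt6 (σ : ℤ × ℤ) (k : ℤ) (hk : 0 ≤ k) (Kstar : ℤ × ℤ → ℤ)
    (h : Relation.ReflTransGen (StepD σ) (Kinit σ k) Kstar) :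
    ∀ τ : ℤ × ℤ, τ ≠ σ → Kstar τ ≤ max 0 (k - mdist σ τ + 1) := by
  suffices h2 : Kstar σ = k ∧ ∀ τ : ℤ × ℤ, τ ≠ σ → Kstar τ ≤ max 0 (k - mdist σ τ + 1) by
    exact h2.2
  induction h with
  | refl =>
    refine ⟨by simp [Kinit], fun τ hτ => ?_⟩
    simp only [Kinit, if_neg hτ]
    exact le_max_left _ _
  | tail _ hstep ih =>
    obtain ⟨ihσ, ihb⟩ := ih
    rename_i F F' _
    rcases hstep with ⟨a, b, ha, hb, hnb, hle, rfl⟩ | ⟨a, hnb, hlt, rfl⟩ | ⟨a, hnb, hlt, rfl⟩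
    · have hσb : σ ≠ b := Ne.symm hb
      have hσa : σ ≠ a := Ne.symm ha
      constructor
      · rw [Function.update_of_ne hσb, Function.update_of_ne hσa, ihσ]
      · intro τ hτ
        by_cases hτb : τ = b
        · subst hτb
          rw [Function.update_self]
          have bda : mdist σ τ ≤ mdist σ a + 1 := by
            have := mdist_tri σ a τ
            rw [mdist_of_nb hnb] at this; linarith
          have h3 : F a ≤ max 0 (k - mdist σ a + 1) := ihb a ha
          rcases max_cases 0 (k - mdist σ a + 1) with ⟨e1, l1⟩ | ⟨e1, l1⟩ <;>
            rcases max_cases 0 (k - mdist σ τ + 1) with ⟨e2, l2⟩ | ⟨e2, l2⟩ <;>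
              rw [e1] at h3 <;> rw [e2] <;> omega
        · rw [Function.update_of_ne hτb]
          by_cases hτa : τ = a
          · subst hτa
            rw [Function.update_self]
            have := ihb τ hτ
            omega
          · rw [Function.update_of_ne hτa]
            exact ihb τ hτ
    · have hσa : σ ≠ a := fun e => nb_ne hnb e.symm
      constructor
      · rw [Function.update_of_ne hσa, ihσ]
      · intro τ hτ
        by_cases hτa : τ = a
        · subst hτa
          rw [Function.update_self]
          have hd : mdist σ τ = 1 := by rw [mdist_comm]; exact mdist_of_nb hnb
          rw [hd]
          rw [ihσ] at hlt
          have : max 0 (k - 1 + 1) = k := by omega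
          omega
        · rw [Function.update_of_ne hτa]
          exact ihb τ hτ
    · have hσa : σ ≠ a := fun e => nb_ne hnb e.symm
      constructor
      · rw [Function.update_of_ne hσa, ihσ]
      · intro τ hτ
        by_cases hτa : τ = a
        · subst hτa
          rw [Function.update_self]
          have := ihb τ hτ
          omega
        · rw [Function.update_of_ne hτa]
          exact ihb τ hτ
end

section
/- For the flow-firing process with distinguished face σ and initial configuration K (K σ = k ≥ 2, zero elsewhere), every firing sequence from K to the unique stable configuration K• is finite, and K• is the unique stable configuration reachable from K (global confluence). -/
/-- The "Aztec pyramid" configuration. -/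
def Kbullet (σ : ℤ × ℤ) (k : ℤ) : ℤ × ℤ → ℤ :=
  fun τ => if τ = σ then k else max 0 (k - mdist σ τ + 1)

/- ===== auxiliary development ===== -/

lemma nb_symm {a b : ℤ × ℤ} (h : Nb a b) : Nb b a := by
  unfold Nb at *
  rw [abs_sub_comm b.1, abs_sub_comm b.2]; exact h

lemma mdist_nonneg (a b : ℤ × ℤ) : 0 ≤ mdist a b :=
  add_nonneg (abs_nonneg _) (abs_nonneg _)

lemma mdist_eq_zero {a b : ℤ × ℤ} (h : mdist a b = 0) : a = b := by
  unfold mdist at h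
  simp only [Int.abs_eq_natAbs] at h
  exact Prod.ext (by omega) (by omega)

lemma mdist_nb {σ a b : ℤ × ℤ} (h : Nb a b) : mdist σ a ≤ mdist σ b + 1 := by
  unfold Nb at h
  unfold mdist
  simp only [Int.abs_eq_natAbs] at h ⊢
  omega

lemma nb_of_mdist_one {σ τ : ℤ × ℤ} (h : mdist σ τ = 1) : Nb τ σ := by
  unfold mdist at h
  unfold Nb
  rw [abs_sub_comm τ.1, abs_sub_comm τ.2]; exact h

/-- a neighbour strictly closer to `σ`. -/
lemma exists_nb_closer {σ τ : ℤ × ℤ} (h : 1 ≤ mdist σ τ) :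
    ∃ ρ : ℤ × ℤ, Nb τ ρ ∧ mdist σ ρ = mdist σ τ - 1 := by
  rcases lt_trichotomy σ.1 τ.1 with h1 | h1 | h1
  · exact ⟨(τ.1 - 1, τ.2), by simp [Nb], by
      simp only [mdist, Int.abs_eq_natAbs]; omega⟩
  · rcases lt_trichotomy σ.2 τ.2 with h2 | h2 | h2
    · exact ⟨(τ.1, τ.2 - 1), by simp [Nb], by
        simp only [mdist, Int.abs_eq_natAbs]; omega⟩
    · exfalso
      simp only [mdist, Int.abs_eq_natAbs] at h
      omega
    · exact ⟨(τ.1, τ.2 + 1), by simp [Nb], by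
        simp only [mdist, Int.abs_eq_natAbs]; omega⟩
  · exact ⟨(τ.1 + 1, τ.2), by simp [Nb], by
      simp only [mdist, Int.abs_eq_natAbs]; omega⟩

lemma kb_self (σ : ℤ × ℤ) (k : ℤ) : Kbullet σ k σ = k := by simp [Kbullet]

lemma kb_ne {σ τ : ℤ × ℤ} (k : ℤ) (h : τ ≠ σ) :
    Kbullet σ k τ = max 0 (k - mdist σ τ + 1) := by simp [Kbullet, h]

lemma max_mono1 {u v : ℤ} (h : u ≤ v + 1) : max 0 u ≤ max 0 v + 1 := by omega

lemma max_pos {u : ℤ} (h : 0 < max 0 u) : 0 < u := by omega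

lemma kb_lip {σ a b : ℤ × ℤ} {k : ℤ} (ha : a ≠ σ) (hb : b ≠ σ) (hnb : Nb a b) :
    Kbullet σ k a ≤ Kbullet σ k b + 1 := by
  rw [kb_ne k ha, kb_ne k hb]
  have h := mdist_nb (σ := σ) (nb_symm hnb)
  exact max_mono1 (by omega)

/-- The invariant maintained by the process. -/
def FFInv (σ : ℤ × ℤ) (k : ℤ) (F : ℤ × ℤ → ℤ) : Prop :=
  F σ = k ∧ ∀ τ, 0 ≤ F τ ∧ F τ ≤ Kbullet σ k τ

/-- The finite box containing all action. -/
noncomputable def ball (σ : ℤ × ℤ) (k : ℤ) : Finset (ℤ × ℤ) :=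
  Finset.Icc (σ.1 - k) (σ.1 + k) ×ˢ Finset.Icc (σ.2 - k) (σ.2 + k)

lemma kb_pos_mem {σ τ : ℤ × ℤ} {k : ℤ} (hk : 0 ≤ k) (h : 0 < Kbullet σ k τ) :
    τ ∈ ball σ k := by
  simp only [ball, Finset.mem_product, Finset.mem_Icc]
  by_cases hτ : τ = σ
  · subst hτ; omega
  · rw [kb_ne k hτ] at h
    have hm : mdist σ τ ≤ k := by
      have := max_pos h
      omega
    unfold mdist at hm
    simp only [Int.abs_eq_natAbs] at hm
    omega

lemma nb_mem {σ a : ℤ × ℤ} {k : ℤ} (hk : 1 ≤ k) (h : Nb a σ) : a ∈ ball σ k := by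
  simp only [ball, Finset.mem_product, Finset.mem_Icc]
  unfold Nb at h
  simp only [Int.abs_eq_natAbs] at h
  omega

/-- The potential function. -/
noncomputable def psi (σ : ℤ × ℤ) (k : ℤ) (F : ℤ × ℤ → ℤ) : ℤ :=
  ∑ τ ∈ ball σ k, (2 * k * (Kbullet σ k τ - F τ) + F τ ^ 2)

lemma psi_nonneg (σ : ℤ × ℤ) (k : ℤ) (hk : 0 ≤ k) (F : ℤ × ℤ → ℤ)
    (hF : FFInv σ k F) : 0 ≤ psi σ k F := by
  refine Finset.sum_nonneg fun τ _ => ?_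
  have h1 := (hF.2 τ).2
  have h2 : 0 ≤ 2 * k * (Kbullet σ k τ - F τ) := mul_nonneg (by linarith) (by linarith)
  have h3 := sq_nonneg (F τ)
  linarith

lemma sum_diff_pair {s : Finset (ℤ × ℤ)} {f g : ℤ × ℤ → ℤ} {a b : ℤ × ℤ}
    (ha : a ∈ s) (hb : b ∈ s) (hab : a ≠ b)
    (h : ∀ τ, τ ≠ a → τ ≠ b → g τ = f τ) :
    ∑ τ ∈ s, g τ = ∑ τ ∈ s, f τ + (g a - f a) + (g b - f b) := by
  have hsub : ({a, b} : Finset (ℤ × ℤ)) ⊆ s := by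
    intro x hx; simp only [Finset.mem_insert, Finset.mem_singleton] at hx
    rcases hx with rfl | rfl <;> assumption
  have key : ∑ τ ∈ s, (g τ - f τ) = ∑ τ ∈ ({a, b} : Finset (ℤ × ℤ)), (g τ - f τ) := by
    refine (Finset.sum_subset hsub fun x _ hx => ?_).symm
    simp only [Finset.mem_insert, Finset.mem_singleton] at hx
    push_neg at hx
    rw [h x hx.1 hx.2]; ring
  rw [Finset.sum_pair hab] at key
  rw [Finset.sum_sub_distrib] at key
  linarith

lemma sum_diff_single {s : Finset (ℤ × ℤ)} {f g : ℤ × ℤ → ℤ} {a : ℤ × ℤ}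
    (ha : a ∈ s) (h : ∀ τ, τ ≠ a → g τ = f τ) :
    ∑ τ ∈ s, g τ = ∑ τ ∈ s, f τ + (g a - f a) := by
  have hsub : ({a} : Finset (ℤ × ℤ)) ⊆ s := by
    intro x hx; simp only [Finset.mem_singleton] at hx; subst hx; exact ha
  have key : ∑ τ ∈ s, (g τ - f τ) = ∑ τ ∈ ({a} : Finset (ℤ × ℤ)), (g τ - f τ) := by
    refine (Finset.sum_subset hsub fun x _ hx => ?_).symm
    simp only [Finset.mem_singleton] at hx
    rw [h x hx]; ring
  rw [Finset.sum_singleton] at key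
  rw [Finset.sum_sub_distrib] at key
  linarith

lemma inv_init (σ : ℤ × ℤ) (k : ℤ) (hk : 2 ≤ k) : FFInv σ k (Kinit σ k) := by
  constructor
  · simp [Kinit]
  · intro τ
    by_cases h : τ = σ
    · subst h
      constructor
      · simp [Kinit]; omega
      · simp [Kinit, Kbullet]
    · simp only [Kinit, Kbullet, if_neg h]
      exact ⟨le_refl 0, le_max_left _ _⟩

/-- One step preserves the invariant and decreases the potential. -/
lemma step_main (σ : ℤ × ℤ) (k : ℤ) (hk : 2 ≤ k) (F F' : ℤ × ℤ → ℤ)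
    (hF : FFInv σ k F) (hs : StepD σ F F') :
    FFInv σ k F' ∧ psi σ k F' + 1 ≤ psi σ k F := by
  obtain ⟨hσ, hbd⟩ := hF
  rcases hs with ⟨a, b, haσ, hbσ, hnb, hge, rfl⟩ | ⟨a, hnb, hlt, rfl⟩ | ⟨a, hnb, hlt, rfl⟩
  · -- internal firing
    have hab : a ≠ b := nb_ne hnb
    have hlip : Kbullet σ k a ≤ Kbullet σ k b + 1 := kb_lip haσ hbσ hnb
    have hFa := hbd a
    have hFb := hbd b
    have hval : ∀ τ, (Function.update (Function.update F a (F a - 1)) b (F b + 1)) τ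
        = if τ = b then F b + 1 else if τ = a then F a - 1 else F τ := by
      intro τ
      by_cases h1 : τ = b
      · subst h1; simp
      · by_cases h2 : τ = a
        · subst h2; simp [Function.update_of_ne h1, hab]
        · rw [Function.update_of_ne h1, Function.update_of_ne h2, if_neg h1, if_neg h2]
    have hFFInv' : FFInv σ k (Function.update (Function.update F a (F a - 1)) b (F b + 1)) := by
      constructor
      · rw [hval σ]
        simp only [if_neg (Ne.symm hbσ), if_neg (Ne.symm haσ)]; exact hσ
      · intro τ
        rw [hval τ]
        by_cases h1 : τ = b
        · subst h1; simp only [if_pos rfl]; omega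
        · by_cases h2 : τ = a
          · subst h2; simp only [if_neg h1, if_pos rfl]; omega
          · simp only [if_neg h1, if_neg h2]; exact hbd τ
    refine ⟨hFFInv', ?_⟩
    have hamem : a ∈ ball σ k := kb_pos_mem (by omega) (by omega)
    have hbmem : b ∈ ball σ k := kb_pos_mem (by omega) (by omega)
    have eb : Function.update (Function.update F a (F a - 1)) b (F b + 1) b = F b + 1 := by
      simp
    have ea : Function.update (Function.update F a (F a - 1)) b (F b + 1) a = F a - 1 := by
      rw [Function.update_of_ne hab, Function.update_self]
    unfold psi
    rw [sum_diff_pair hbmem hamem (Ne.symm hab)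
      (fun τ h1 h2 => by rw [hval τ, if_neg h1, if_neg h2])]
    simp only [eb, ea]
    nlinarith [hFa.2, hFb.1]
  · -- absorption at the hole (increase)
    have haσ : a ≠ σ := fun h => by subst h; simp [Nb] at hnb
    have hkba : Kbullet σ k a = k := by
      rw [kb_ne k haσ]
      have : mdist σ a = 1 := by
        unfold Nb at hnb; unfold mdist
        rw [abs_sub_comm σ.1, abs_sub_comm σ.2]; exact hnb
      rw [this, max_eq_right (by omega : (0:ℤ) ≤ k - 1 + 1)]
      omega
    rw [hσ] at hlt
    have hFa := hbd a
    have hFFInv' : FFInv σ k (Function.update F a (F a + 1)) := by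
      constructor
      · rw [Function.update_of_ne (Ne.symm haσ)]; exact hσ
      · intro τ
        by_cases h : τ = a
        · subst h; simp [hkba]; omega
        · rw [Function.update_of_ne h]; exact hbd τ
    refine ⟨hFFInv', ?_⟩
    have hamem : a ∈ ball σ k := nb_mem (by omega) hnb
    unfold psi
    rw [sum_diff_single hamem (fun τ h1 => by rw [Function.update_of_ne h1])]
    simp only [Function.update_self]
    nlinarith [hFa.1]
  · -- absorption at the hole (decrease)
    have haσ : a ≠ σ := fun h => by subst h; simp [Nb] at hnb
    rw [hσ] at hlt
    have hFa := hbd a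
    have hFFInv' : FFInv σ k (Function.update F a (F a - 1)) := by
      constructor
      · rw [Function.update_of_ne (Ne.symm haσ)]; exact hσ
      · intro τ
        by_cases h : τ = a
        · subst h; simp; omega
        · rw [Function.update_of_ne h]; exact hbd τ
    refine ⟨hFFInv', ?_⟩
    have hamem : a ∈ ball σ k := kb_pos_mem (by omega) (by omega)
    unfold psi
    rw [sum_diff_single hamem (fun τ h1 => by rw [Function.update_of_ne h1])]
    simp only [Function.update_self]
    nlinarith [hFa.1]

/-- A stable configuration satisfying the invariant is the Aztec pyramid. -/
lemma stable_eq (σ : ℤ × ℤ) (k : ℤ) (hk : 2 ≤ k) (F : ℤ × ℤ → ℤ)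
    (hFFInv : FFInv σ k F) (hst : ¬ ∃ F', StepD σ F F') : F = Kbullet σ k := by
  obtain ⟨hσ, hbd⟩ := hFFInv
  push_neg at hst
  have S1 : ∀ a b : ℤ × ℤ, a ≠ σ → b ≠ σ → Nb a b → F a ≤ F b + 1 := by
    intro a b ha hb hnb
    by_contra hcon
    exact hst _ (Or.inl ⟨a, b, ha, hb, hnb, by omega, rfl⟩)
  have S2 : ∀ a : ℤ × ℤ, Nb a σ → F a = k := by
    intro a hnb
    rcases lt_trichotomy (F a) (F σ) with h | h | h
    · exact absurd (Or.inr (Or.inl ⟨a, hnb, h, rfl⟩)) (hst _)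
    · rw [h, hσ]
    · exact absurd (Or.inr (Or.inr ⟨a, hnb, h, rfl⟩)) (hst _)
  have key : ∀ n : ℕ, ∀ τ : ℤ × ℤ, mdist σ τ = n → F τ = Kbullet σ k τ := by
    intro n
    induction n using Nat.strong_induction_on with
    | _ n ih =>
      intro τ hd
      rcases Nat.lt_or_ge n 2 with h2 | h2
      · interval_cases n
        · have : σ = τ := mdist_eq_zero (by simpa using hd)
          subst this; rw [hσ, kb_self]
        · have hnb : Nb τ σ := nb_of_mdist_one (by simpa using hd)
          have hτσ : τ ≠ σ := by
            intro h; subst h; simp [mdist] at hd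
          rw [S2 τ hnb, kb_ne k hτσ]
          have : mdist σ τ = 1 := by simpa using hd
          rw [this, max_eq_right (by omega : (0:ℤ) ≤ k - 1 + 1)]
          omega
      · have hτσ : τ ≠ σ := by
          intro h; subst h; simp [mdist] at hd; omega
        obtain ⟨ρ, hnbρ, hdρ⟩ := exists_nb_closer (show (1:ℤ) ≤ mdist σ τ by rw [hd]; exact_mod_cast Nat.one_le_of_lt h2)
        have hρσ : ρ ≠ σ := by
          intro h
          rw [hd, h] at hdρ
          have h0 : mdist σ σ = 0 := by simp [mdist]
          omega
        have hρn : mdist σ ρ = ((n - 1 : ℕ) : ℤ) := by push_cast; omega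
        have hFρ := ih (n - 1) (by omega) ρ hρn
        have hub := (hbd τ).2
        have hlb := (hbd τ).1
        rw [kb_ne k hρσ] at hFρ
        rw [kb_ne k hτσ] at hub ⊢
        rw [hd] at hub ⊢
        rw [hρn] at hFρ
        have hcast : k - ((n - 1 : ℕ) : ℤ) + 1 = k - (n : ℤ) + 1 + 1 := by push_cast; omega
        rw [hcast] at hFρ
        by_cases hpos : 0 < k - (n : ℤ) + 1
        · have hS := S1 ρ τ hρσ hτσ (nb_symm hnbρ)
          rw [max_eq_right (by omega : (0:ℤ) ≤ k - (n : ℤ) + 1)] at hub ⊢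
          rw [max_eq_right (by omega : (0:ℤ) ≤ k - (n : ℤ) + 1 + 1)] at hFρ
          omega
        · rw [max_eq_left (by omega : k - (n : ℤ) + 1 ≤ 0)] at hub ⊢
          omega
  funext τ
  exact key (mdist σ τ).toNat τ (Int.toNat_of_nonneg (mdist_nonneg σ τ)).symm


/-- Global confluence for the pulse around a hole: the process terminates and the
unique stable configuration reachable from `Kinit σ k` is the Aztec pyramid. -/
theorem stmt19 (σ : ℤ × ℤ) (k : ℤ) (hk : 2 ≤ k) :
    (¬ ∃ seq : ℕ → (ℤ × ℤ → ℤ), seq 0 = Kinit σ k ∧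
        ∀ n, StepD σ (seq n) (seq (n + 1))) ∧
    (∀ F : ℤ × ℤ → ℤ, Relation.ReflTransGen (StepD σ) (Kinit σ k) F →
      (¬ ∃ F', StepD σ F F') → F = Kbullet σ k) := by
  constructor
  · rintro ⟨seq, h0, hstep⟩
    have hFFInv : ∀ n, FFInv σ k (seq n) := by
      intro n
      induction n with
      | zero => rw [h0]; exact inv_init σ k hk
      | succ n ih => exact (step_main σ k hk _ _ ih (hstep n)).1
    have hdec : ∀ n : ℕ, psi σ k (seq n) + n ≤ psi σ k (seq 0) := by
      intro n
      induction n with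
      | zero => simp
      | succ n ih =>
        have := (step_main σ k hk _ _ (hFFInv n) (hstep n)).2
        push_cast
        push_cast at ih
        linarith
    have hpos := psi_nonneg σ k (by omega) _ (hFFInv ((psi σ k (seq 0)).toNat + 1))
    have h1 := hdec ((psi σ k (seq 0)).toNat + 1)
    push_cast at h1
    omega
  · intro F hreach hstable
    have hFFInv : FFInv σ k F := by
      clear hstable
      induction hreach with
      | refl => exact inv_init σ k hk
      | tail _ hstep ih => exact (step_main σ k hk _ _ ih hstep).1
    exact stable_eq σ k hk F hFFInv hstable
end
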